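/- Let H be an infinite dimensional quasi-Hopf algebra with bijective antipode. Then ∫ₗ = ∫ᵣ = 0. -/

import Mathlib

set_option autoImplicit false

open TensorProduct

/-- A quasi-bialgebra in the sense of Drinfeld. The reassociator `Phi` lives in
`H ⊗ (H ⊗ H)`, and `(Δ ⊗ id)` is transported along the associator. -/
structure QuasiBialgebra (k H : Type*) [Field k] [Ring H] [Algebra k H] where
  comul : H →ₐ[k] H ⊗[k] H
  counit : H →ₐ[k] k
  Phi : H ⊗[k] (H ⊗[k] H)
  PhiInv : H ⊗[k] (H ⊗[k] H)
  Phi_invertible : Phi * PhiInv = 1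
  invertible_Phi : PhiInv * Phi = 1
  quasi_coassoc : ∀ h : H,
    (Algebra.TensorProduct.map (AlgHom.id k H) comul) (comul h) * Phi
      = Phi * (Algebra.TensorProduct.assoc k k k H H H)
          ((Algebra.TensorProduct.map comul (AlgHom.id k H)) (comul h))
  counit_right : ∀ h : H,
    (Algebra.TensorProduct.map (AlgHom.id k H) counit) (comul h) = h ⊗ₜ[k] 1
  counit_left : ∀ h : H,
    (Algebra.TensorProduct.map counit (AlgHom.id k H)) (comul h) = 1 ⊗ₜ[k] h
  pentagon :
    (1 ⊗ₜ[k] Phi)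
      * (Algebra.TensorProduct.map (AlgHom.id k H)
          ((Algebra.TensorProduct.assoc k k k H H H).toAlgHom.comp
            (Algebra.TensorProduct.map comul (AlgHom.id k H)))) Phi
      * (Algebra.TensorProduct.map (AlgHom.id k H)
            (Algebra.TensorProduct.assoc k k k H H H).toAlgHom)
          ((Algebra.TensorProduct.assoc k k k H (H ⊗[k] H) H) (Phi ⊗ₜ[k] 1))
    = (Algebra.TensorProduct.map (AlgHom.id k H)
        (Algebra.TensorProduct.map (AlgHom.id k H) comul)) Phi
      * (Algebra.TensorProduct.assoc k k k H H (H ⊗[k] H))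
          ((Algebra.TensorProduct.map comul (AlgHom.id k (H ⊗[k] H))) Phi)
  counit_mid_Phi :
    (Algebra.TensorProduct.map (AlgHom.id k H)
      (Algebra.TensorProduct.map counit (AlgHom.id k H))) Phi = 1

/-- A quasi-Hopf algebra: a quasi-bialgebra with an algebra anti-homomorphism `S`
and elements `alpha`, `beta` satisfying Drinfeld's antipode axioms.  Bijectivity
of `S` is *not* assumed. -/
structure QuasiHopfAlgebra (k H : Type*) [Field k] [Ring H] [Algebra k H] extends
    QuasiBialgebra k H where
  S : H →ₗ[k] H
  alpha : H
  beta : H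
  S_one : S 1 = 1
  S_mul : ∀ a b : H, S (a * b) = S b * S a
  antipode_left : ∀ h : H,
    (LinearMap.mul' k H)
      ((TensorProduct.map ((LinearMap.mulRight k alpha) ∘ₗ S) LinearMap.id) (comul h))
      = counit h • alpha
  antipode_right : ∀ h : H,
    (LinearMap.mul' k H)
      ((TensorProduct.map LinearMap.id ((LinearMap.mulLeft k beta) ∘ₗ S)) (comul h))
      = counit h • beta
  antipode_Phi :
    (LinearMap.mul' k H)
      ((TensorProduct.map LinearMap.id
        ((LinearMap.mul' k H) ∘ₗ (TensorProduct.map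
          ((LinearMap.mulRight k alpha) ∘ₗ ((LinearMap.mulLeft k beta) ∘ₗ S))
          LinearMap.id))) Phi) = 1
  antipode_PhiInv :
    (LinearMap.mul' k H)
      ((TensorProduct.map ((LinearMap.mulRight k alpha) ∘ₗ S)
        ((LinearMap.mul' k H) ∘ₗ (TensorProduct.map (LinearMap.mulRight k beta) S)))
        PhiInv) = 1

namespace QuasiHopfAlgebra

variable {k H : Type*} [Field k] [Ring H] [Algebra k H] (Q : QuasiHopfAlgebra k H)

/-- The space of left integrals in `H`. -/
def leftIntegrals : Submodule k H where
  carrier := {t | ∀ h : H, h * t = Q.counit h • t}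
  add_mem' := by intro a b ha hb h; rw [mul_add, ha h, hb h, smul_add]
  zero_mem' := by intro h; simp
  smul_mem' := by intro c x hx h; rw [mul_smul_comm, hx h, smul_comm]

/-- The space of right integrals in `H`. -/
def rightIntegrals : Submodule k H where
  carrier := {t | ∀ h : H, t * h = Q.counit h • t}
  add_mem' := by intro a b ha hb h; rw [add_mul, ha h, hb h, smul_add]
  zero_mem' := by intro h; simp
  smul_mem' := by intro c x hx h; rw [smul_mul_assoc, hx h, smul_comm]

/-- The element `p_R = ∑ x¹ ⊗ x² β S(x³)`. -/
noncomputable def pR : H ⊗[k] H :=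
  (TensorProduct.map LinearMap.id
    ((LinearMap.mul' k H) ∘ₗ (TensorProduct.map (LinearMap.mulRight k Q.beta) Q.S)))
    Q.PhiInv

/-- The element `∑ X¹ t₁ ⊗ S(X² t₂) α X³` built from a (left integral) `t`. -/
noncomputable def Tel (t : H) : H ⊗[k] H :=
  (TensorProduct.map LinearMap.id
    ((LinearMap.mul' k H) ∘ₗ
      (TensorProduct.map ((LinearMap.mulRight k Q.alpha) ∘ₗ Q.S) LinearMap.id)))
    (Q.Phi * (Algebra.TensorProduct.assoc k k k H H H) (Q.comul t ⊗ₜ[k] 1))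

end QuasiHopfAlgebra

/-!
For a left integral `t`, the element `T = X¹t₁ ⊗ S(X²t₂)αX³` of `H ⊗ H` (`Tel t`) satisfies
`(h ⊗ 1) T = T (1 ⊗ h)` by quasi-coassociativity. The map `g ⊗ x ↦ Δ(g) p_R (1 ⊗ x)`
(`pRSandwich`) sends `(h ⊗ 1) T` to `t ⊗ h`: this rests on the identities
`Δ(g₁) p_R (1 ⊗ S(g₂)) = p_R (g ⊗ 1)` and `Δ(X¹) p_R (1 ⊗ S(X²) α X³) = 1 ⊗ 1`, the second one
a consequence of the pentagon axiom.
So if `t ≠ 0`, then `h ↦ (h ⊗ 1) T` is injective, which forces `H` to be finite-dimensional.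
A right integral `t` gives the left integral `S⁻¹ t`, because `ε ∘ S = ε`.
-/

namespace TensorProduct

variable {k M N : Type*} [Field k] [AddCommGroup M] [Module k M] [AddCommGroup N] [Module k N]

lemma eq_zero_of_tmul_eq_zero {m : M} (hm : m ≠ 0) {n : N} (h : m ⊗ₜ[k] n = 0) : n = 0 := by
  obtain ⟨f, hf⟩ : ∃ f : Module.Dual k M, f m ≠ 0 := by
    by_contra! hf
    exact hm ((Module.forall_dual_apply_eq_zero_iff k m).mp hf)
  have := congrArg (fun x => TensorProduct.lid k N (f.rTensor N x)) h
  simpa [hf] using this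

def rightSlices (x : M ⊗[k] N) : Submodule k M :=
  Submodule.span k (Set.range fun ψ : Module.Dual k N => TensorProduct.rid k M (ψ.lTensor M x))

lemma finiteDimensional_rightSlices (x : M ⊗[k] N) : FiniteDimensional k (rightSlices x) := by
  classical
  let 𝒞 := Module.Basis.ofVectorSpace k N
  obtain ⟨b, rfl⟩ := eq_repr_basis_right 𝒞 (M := M) x
  have := FiniteDimensional.span_of_finite k (b.support.finite_toSet.image b)
  refine Submodule.finiteDimensional_of_le (S₂ := Submodule.span k (b '' b.support))
    (Submodule.span_le.mpr ?_)
  rintro _ ⟨ψ, rfl⟩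
  simp only [Finsupp.sum, map_sum, LinearMap.lTensor_tmul, rid_tmul]
  exact Submodule.sum_mem _ fun i hi => Submodule.smul_mem _ _ (Submodule.subset_span ⟨i, hi, rfl⟩)

lemma eq_zero_of_forall_rid_lTensor_eq_zero (x : M ⊗[k] N)
    (h : ∀ ψ : Module.Dual k N, TensorProduct.rid k M (ψ.lTensor M x) = 0) : x = 0 := by
  classical
  let 𝒞 := Module.Basis.ofVectorSpace k N
  apply (equivFinsuppOfBasisRight 𝒞).injective
  ext i
  simp [equivFinsuppOfBasisRight_apply, h]

end TensorProduct

section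

variable {k A B : Type*} [Field k] [Ring A] [Algebra k A] [Ring B] [Algebra k B]

lemma rid_lTensor_tmul_one_mul (ψ : Module.Dual k B) (a : A) (x : A ⊗[k] B) :
    TensorProduct.rid k A (ψ.lTensor A ((a ⊗ₜ 1) * x))
      = a * TensorProduct.rid k A (ψ.lTensor A x) := by
  induction x using TensorProduct.induction_on with
  | zero => simp
  | tmul c d => simp [Algebra.TensorProduct.tmul_mul_tmul]
  | add x y hx hy => simp [mul_add, hx, hy]

lemma rid_lTensor_mul_one_tmul (ψ : Module.Dual k B) (b : B) (x : A ⊗[k] B) :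
    TensorProduct.rid k A (ψ.lTensor A (x * (1 ⊗ₜ b)))
      = TensorProduct.rid k A ((ψ ∘ₗ LinearMap.mulRight k b).lTensor A x) := by
  induction x using TensorProduct.induction_on with
  | zero => simp
  | tmul c d => simp [Algebra.TensorProduct.tmul_mul_tmul]
  | add x y hx hy => simp [add_mul, hx, hy]

/-- Since `(a ⊗ 1) T = T (1 ⊗ a)`, the slices `(id ⊗ ψ) T` span a finite-dimensional left ideal,
and `A` acts faithfully on it by left multiplication. -/
theorem finiteDimensional_of_tmul_one_mul_eq_mul_one_tmul (T : A ⊗[k] A)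
    (hT : ∀ a : A, (a ⊗ₜ 1) * T = T * (1 ⊗ₜ a))
    (hfaithful : ∀ a : A, (a ⊗ₜ 1) * T = 0 → a = 0) : FiniteDimensional k A := by
  set L := TensorProduct.rightSlices T
  have := TensorProduct.finiteDimensional_rightSlices T
  have hL : ∀ a : A, ∀ v ∈ L, a * v ∈ L := by
    intro a v hv
    induction hv using Submodule.span_induction with
    | mem v hv =>
      obtain ⟨ψ, rfl⟩ := hv
      rw [← rid_lTensor_tmul_one_mul, hT, rid_lTensor_mul_one_tmul]
      exact Submodule.subset_span ⟨_, rfl⟩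
    | zero => simp
    | add v w _ _ hv hw => simpa [mul_add] using L.add_mem hv hw
    | smul c v _ hv => simpa using L.smul_mem c hv
  let ρ : A →ₗ[k] L →ₗ[k] L :=
    { toFun := fun a => (LinearMap.mulLeft k a).restrict (hL a)
      map_add' := fun a b => by ext v; exact add_mul a b (v : A)
      map_smul' := fun c a => by ext v; exact smul_mul_assoc c a (v : A) }
  refine Module.Finite.of_injective ρ ((injective_iff_map_eq_zero ρ).mpr fun a ha => ?_)
  refine hfaithful a (TensorProduct.eq_zero_of_forall_rid_lTensor_eq_zero _ fun ψ => ?_)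
  rw [rid_lTensor_tmul_one_mul]
  exact congrArg Subtype.val (LinearMap.congr_fun ha ⟨_, Submodule.subset_span ⟨ψ, rfl⟩⟩)

end

namespace Algebra.TensorProduct

variable {k A B C D : Type*} [CommRing k] [Ring A] [Algebra k A] [Ring B] [Algebra k B]
  [Ring C] [Algebra k C] [Ring D] [Algebra k D]

lemma map_id_comp_apply (g : B →ₐ[k] C) (f : A →ₐ[k] B) (u : D ⊗[k] A) :
    map (AlgHom.id k D) (g.comp f) u = map (AlgHom.id k D) g (map (AlgHom.id k D) f u) := by
  rw [map_id_comp, AlgHom.comp_apply]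

lemma map_id_map_mul_eq (φ : B →ₗ[k] C) (F : A →ₐ[k] B) (G : A →ₐ[k] C)
    (hφ : ∀ a b, φ (F a * b) = G a * φ b) (w : D ⊗[k] A) (κ : D ⊗[k] B) :
    _root_.TensorProduct.map LinearMap.id φ (map (AlgHom.id k D) F w * κ)
      = map (AlgHom.id k D) G w * _root_.TensorProduct.map LinearMap.id φ κ := by
  induction w using TensorProduct.induction_on with
  | zero => simp
  | tmul x a =>
    induction κ using TensorProduct.induction_on with
    | zero => simp
    | tmul p b => simp [hφ]
    | add κ κ' h h' => simp only [mul_add, map_add, h, h']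
  | add w w' h h' => simp only [map_add, add_mul, h, h']

lemma map_mul_map_id_eq (φ : B →ₗ[k] C) (F : A →ₐ[k] B) (G : A →ₐ[k] C)
    (hφ : ∀ b a, φ (b * F a) = φ b * G a) (w : D ⊗[k] A) (κ : D ⊗[k] B) :
    _root_.TensorProduct.map LinearMap.id φ (κ * map (AlgHom.id k D) F w)
      = _root_.TensorProduct.map LinearMap.id φ κ * map (AlgHom.id k D) G w := by
  induction w using TensorProduct.induction_on with
  | zero => simp
  | tmul x a =>
    induction κ using TensorProduct.induction_on with
    | zero => simp
    | tmul p b => simp [hφ]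
    | add κ κ' h h' => simp only [add_mul, map_add, h, h']
  | add w w' h h' => simp only [map_add, mul_add, h, h']

end Algebra.TensorProduct

namespace QuasiHopfAlgebra

variable {k H : Type*} [Field k] [Ring H] [Algebra k H] (Q : QuasiHopfAlgebra k H)

noncomputable def counitRight : H ⊗[k] H →ₐ[k] H :=
  (Algebra.TensorProduct.rid k k H).toAlgHom.comp
    (Algebra.TensorProduct.map (AlgHom.id k H) Q.counit)

noncomputable def counitLeft : H ⊗[k] H →ₐ[k] H :=
  (Algebra.TensorProduct.lid k H).toAlgHom.comp
    (Algebra.TensorProduct.map Q.counit (AlgHom.id k H))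

noncomputable def counitRight₂ : H ⊗[k] (H ⊗[k] H) →ₐ[k] H :=
  Q.counitRight.comp (Algebra.TensorProduct.map (AlgHom.id k H) Q.counitLeft)

@[simp] lemma counitRight_tmul (b c : H) : Q.counitRight (b ⊗ₜ c) = Q.counit c • b := by
  simp [counitRight]

@[simp] lemma counitLeft_tmul (b c : H) : Q.counitLeft (b ⊗ₜ c) = Q.counit b • c := by
  simp [counitLeft]

@[simp] lemma counitRight₂_tmul (a : H) (w : H ⊗[k] H) :
    Q.counitRight₂ (a ⊗ₜ w) = Q.counit (Q.counitLeft w) • a := by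
  simp [counitRight₂]

lemma counitRight_comul (x : H) : Q.counitRight (Q.comul x) = x := by
  simp [counitRight, Q.counit_right]

lemma counitLeft_comul (x : H) : Q.counitLeft (Q.comul x) = x := by
  simp [counitLeft, Q.counit_left]

lemma map_counitLeft_Phi :
    Algebra.TensorProduct.map (AlgHom.id k H) Q.counitLeft Q.Phi = 1 := by
  rw [counitLeft, Algebra.TensorProduct.map_id_comp, AlgHom.comp_apply, Q.counit_mid_Phi,
    map_one]

lemma counitRight₂_Phi : Q.counitRight₂ Q.Phi = 1 := by
  rw [counitRight₂, AlgHom.comp_apply, map_counitLeft_Phi, map_one]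

lemma counitRight₂_assoc_tmul (u : H ⊗[k] H) (c : H) :
    Q.counitRight₂ (Algebra.TensorProduct.assoc k k k H H H (u ⊗ₜ c))
      = Q.counit c • Q.counitRight u := by
  induction u using TensorProduct.induction_on with
  | zero => simp
  | tmul a b => simp [smul_smul, mul_comm]
  | add u v hu hv => simp [TensorProduct.add_tmul, hu, hv]

lemma counitRight₂_comp_assoc_map_comul :
    Q.counitRight₂.comp ((Algebra.TensorProduct.assoc k k k H H H).toAlgHom.comp
      (Algebra.TensorProduct.map Q.comul (AlgHom.id k H))) = Q.counitRight := by
  refine Algebra.TensorProduct.ext' fun a b => ?_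
  simp [counitRight₂_assoc_tmul, counitRight_comul]

lemma counitRight₂_comp_map_comul :
    Q.counitRight₂.comp (Algebra.TensorProduct.map (AlgHom.id k H) Q.comul) = Q.counitRight := by
  refine Algebra.TensorProduct.ext' fun a b => ?_
  simp [counitRight₂, counitLeft_comul]

lemma map_counitRight₂_assoc_tmul (e w : H ⊗[k] H) :
    Algebra.TensorProduct.map (AlgHom.id k H) Q.counitRight₂
        (Algebra.TensorProduct.assoc k k k H H (H ⊗[k] H) (e ⊗ₜ w))
      = Q.counit (Q.counitLeft w) • e := by
  induction e using TensorProduct.induction_on with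
  | zero => simp
  | tmul p q => simp [TensorProduct.smul_tmul']
  | add u v hu hv => simp [TensorProduct.add_tmul, hu, hv]

lemma map_counitRight₂_assoc_map_comul (u : H ⊗[k] (H ⊗[k] H)) :
    Algebra.TensorProduct.map (AlgHom.id k H) Q.counitRight₂
        (Algebra.TensorProduct.assoc k k k H H (H ⊗[k] H)
          (Algebra.TensorProduct.map Q.comul (AlgHom.id k (H ⊗[k] H)) u))
      = Q.comul (Q.counitRight₂ u) := by
  induction u using TensorProduct.induction_on with
  | zero => simp
  | tmul a w => simp [map_counitRight₂_assoc_tmul]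
  | add u v hu hv => simp only [map_add, hu, hv]

lemma map_counitRight₂_comp_assoc_assoc_tmul_one (u : H ⊗[k] (H ⊗[k] H)) :
    Algebra.TensorProduct.map (AlgHom.id k H)
        (Q.counitRight₂.comp (Algebra.TensorProduct.assoc k k k H H H).toAlgHom)
        (Algebra.TensorProduct.assoc k k k H (H ⊗[k] H) H (u ⊗ₜ 1))
      = Algebra.TensorProduct.map (AlgHom.id k H) Q.counitRight u := by
  induction u using TensorProduct.induction_on with
  | zero => simp
  | tmul a w => simp [counitRight₂_assoc_tmul]
  | add u v hu hv => simp only [TensorProduct.add_tmul, map_add, hu, hv]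

lemma map_counitRight_Phi_mul_self :
    Algebra.TensorProduct.map (AlgHom.id k H) Q.counitRight Q.Phi
        * Algebra.TensorProduct.map (AlgHom.id k H) Q.counitRight Q.Phi
      = Algebra.TensorProduct.map (AlgHom.id k H) Q.counitRight Q.Phi := by
  simpa only [map_mul, ← Algebra.TensorProduct.map_id_comp_apply,
    counitRight₂_comp_assoc_map_comul, counitRight₂_comp_map_comul,
    map_counitRight₂_comp_assoc_assoc_tmul_one, map_counitRight₂_assoc_map_comul,
    counitRight₂_Phi, map_one, Algebra.TensorProduct.map_tmul, ← Algebra.TensorProduct.one_def,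
    one_mul, mul_one] using
    congrArg (Algebra.TensorProduct.map (AlgHom.id k H) Q.counitRight₂) Q.pentagon

lemma map_counitRight_Phi :
    Algebra.TensorProduct.map (AlgHom.id k H) Q.counitRight Q.Phi = 1 := by
  set E := Algebra.TensorProduct.map (AlgHom.id k H) Q.counitRight
  have hinv : E Q.Phi * E Q.PhiInv = 1 := by rw [← map_mul, Q.Phi_invertible, map_one]
  calc E Q.Phi = E Q.Phi * (E Q.Phi * E Q.PhiInv) := by rw [hinv, mul_one]
    _ = 1 := by rw [← mul_assoc, map_counitRight_Phi_mul_self, hinv]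

lemma map_counitRight_PhiInv :
    Algebra.TensorProduct.map (AlgHom.id k H) Q.counitRight Q.PhiInv = 1 := by
  simpa [map_counitRight_Phi] using
    congrArg (Algebra.TensorProduct.map (AlgHom.id k H) Q.counitRight) Q.Phi_invertible

open LinearMap in
noncomputable def contractAlpha : H ⊗[k] H →ₗ[k] H :=
  mul' k H ∘ₗ TensorProduct.map (mulRight k Q.alpha ∘ₗ Q.S) id

open LinearMap in
noncomputable def contractBeta : H ⊗[k] H →ₗ[k] H :=
  mul' k H ∘ₗ TensorProduct.map (mulRight k Q.beta) Q.S

open LinearMap in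
noncomputable def contractBetaAlpha : H ⊗[k] (H ⊗[k] H) →ₗ[k] H :=
  mul' k H ∘ₗ TensorProduct.map (mulRight k Q.beta) Q.contractAlpha

noncomputable def unitCounit : H →ₐ[k] H := (Algebra.ofId k H).comp Q.counit

@[simp] lemma contractAlpha_tmul (b c : H) :
    Q.contractAlpha (b ⊗ₜ c) = Q.S b * Q.alpha * c := rfl

@[simp] lemma contractBeta_tmul (b c : H) :
    Q.contractBeta (b ⊗ₜ c) = b * Q.beta * Q.S c := rfl

@[simp] lemma contractBetaAlpha_tmul (a : H) (w : H ⊗[k] H) :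
    Q.contractBetaAlpha (a ⊗ₜ w) = a * Q.beta * Q.contractAlpha w := rfl

lemma unitCounit_apply (x : H) : Q.unitCounit x = algebraMap k H (Q.counit x) := rfl

lemma pR_eq : Q.pR = TensorProduct.map LinearMap.id Q.contractBeta Q.PhiInv := rfl

lemma Tel_eq (t : H) :
    Q.Tel t = TensorProduct.map LinearMap.id Q.contractAlpha
      (Q.Phi * Algebra.TensorProduct.assoc k k k H H H (Q.comul t ⊗ₜ 1)) := rfl

lemma contractAlpha_comul (x : H) : Q.contractAlpha (Q.comul x) = Q.counit x • Q.alpha :=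
  Q.antipode_left x

lemma contractBeta_comul (x : H) : Q.contractBeta (Q.comul x) = Q.counit x • Q.beta := by
  have : Q.contractBeta = LinearMap.mul' k H ∘ₗ
      TensorProduct.map LinearMap.id (LinearMap.mulLeft k Q.beta ∘ₗ Q.S) := by
    ext b c
    simp [mul_assoc]
  exact (LinearMap.congr_fun this _).trans (Q.antipode_right x)

lemma contractBetaAlpha_Phi : Q.contractBetaAlpha Q.Phi = 1 := by
  have : Q.contractBetaAlpha = LinearMap.mul' k H ∘ₗ TensorProduct.map LinearMap.id
      (LinearMap.mul' k H ∘ₗ TensorProduct.map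
        (LinearMap.mulRight k Q.alpha ∘ₗ LinearMap.mulLeft k Q.beta ∘ₗ Q.S) LinearMap.id) := by
    ext a b c
    simp [mul_assoc]
  exact (LinearMap.congr_fun this _).trans Q.antipode_Phi

lemma contractAlpha_mul_tmul (e : H ⊗[k] H) (r s : H) :
    Q.contractAlpha (e * (r ⊗ₜ s)) = Q.S r * Q.contractAlpha e * s := by
  induction e using TensorProduct.induction_on with
  | zero => simp
  | tmul b c => simp [Algebra.TensorProduct.tmul_mul_tmul, Q.S_mul, mul_assoc]
  | add u v hu hv => simp [add_mul, hu, hv, mul_add]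

lemma contractAlpha_comul_mul (z : H) (e : H ⊗[k] H) :
    Q.contractAlpha (Q.comul z * e) = Q.unitCounit z * Q.contractAlpha e := by
  induction e using TensorProduct.induction_on with
  | zero => simp
  | tmul r s =>
    rw [contractAlpha_mul_tmul, contractAlpha_comul, unitCounit_apply,
      Algebra.algebraMap_eq_smul_one]
    simp [mul_assoc]
  | add u v hu hv => simp [mul_add, hu, hv]

lemma contractBeta_tmul_mul (y z : H) (u : H ⊗[k] H) :
    Q.contractBeta ((y ⊗ₜ z) * u) = y * Q.contractBeta u * Q.S z := by
  induction u using TensorProduct.induction_on with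
  | zero => simp
  | tmul r s => simp [Algebra.TensorProduct.tmul_mul_tmul, Q.S_mul, mul_assoc]
  | add u v hu hv => simp [mul_add, hu, hv, add_mul]

lemma contractBeta_mul_comul (w : H ⊗[k] H) (e : H) :
    Q.contractBeta (w * Q.comul e) = Q.contractBeta w * Q.unitCounit e := by
  induction w using TensorProduct.induction_on with
  | zero => simp
  | tmul y z =>
    rw [contractBeta_tmul_mul, contractBeta_comul, unitCounit_apply,
      Algebra.algebraMap_eq_smul_one]
    simp [mul_assoc]
  | add u v hu hv => simp [add_mul, hu, hv]

lemma map_unitCounit_comul (g : H) :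
    Algebra.TensorProduct.map (AlgHom.id k H) Q.unitCounit (Q.comul g) = g ⊗ₜ 1 := by
  rw [unitCounit, Algebra.TensorProduct.map_id_comp, AlgHom.comp_apply, Q.counit_right]
  simp [Algebra.ofId_apply]

lemma counit_contractAlpha (u : H ⊗[k] H) :
    Q.counit (Q.contractAlpha u) = Q.counit (Q.S (Q.counitRight u)) * Q.counit Q.alpha := by
  induction u using TensorProduct.induction_on with
  | zero => simp
  | tmul b c => simp [mul_comm, mul_left_comm]
  | add u v hu hv => simp [hu, hv, add_mul]

lemma counit_alpha_ne_zero : Q.counit Q.alpha ≠ 0 := by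
  intro hα
  have hzero : ∀ u, Q.counit (Q.contractBetaAlpha u) = 0 := by
    intro u
    induction u using TensorProduct.induction_on with
    | zero => simp
    | tmul a w => simp [counit_contractAlpha, hα]
    | add u v hu hv => simp [hu, hv]
  simpa [contractBetaAlpha_Phi] using hzero Q.Phi

lemma counit_S (h : H) : Q.counit (Q.S h) = Q.counit h := by
  have := congrArg Q.counit (Q.contractAlpha_comul h)
  rw [counit_contractAlpha, counitRight_comul, map_smul, smul_eq_mul] at this
  exact mul_right_cancel₀ Q.counit_alpha_ne_zero this

noncomputable def pRSandwich : H ⊗[k] H →ₗ[k] H ⊗[k] H :=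
  LinearMap.mul' k (H ⊗[k] H) ∘ₗ TensorProduct.map
    (LinearMap.mulRight k Q.pR ∘ₗ Q.comul.toLinearMap)
    (Algebra.TensorProduct.includeRight : H →ₐ[k] H ⊗[k] H).toLinearMap

@[simp] lemma pRSandwich_tmul (g x : H) :
    Q.pRSandwich (g ⊗ₜ x) = Q.comul g * Q.pR * (1 ⊗ₜ x) := rfl

lemma pRSandwich_tmul_one_mul (h : H) (v : H ⊗[k] H) :
    Q.pRSandwich ((h ⊗ₜ 1) * v) = Q.comul h * Q.pRSandwich v := by
  induction v using TensorProduct.induction_on with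
  | zero => simp
  | tmul a b => simp [Algebra.TensorProduct.tmul_mul_tmul, mul_assoc]
  | add u v hu hv => simp [mul_add, hu, hv]

lemma mul_map_contractBeta_mul_one_tmul_S (e : H ⊗[k] H) (v : H ⊗[k] (H ⊗[k] H)) (b : H) :
    e * TensorProduct.map LinearMap.id Q.contractBeta v * (1 ⊗ₜ Q.S b)
      = TensorProduct.map LinearMap.id Q.contractBeta
          (Algebra.TensorProduct.assoc k k k H H H (e ⊗ₜ b) * v) := by
  induction e using TensorProduct.induction_on with
  | zero => simp
  | tmul p q =>
    induction v using TensorProduct.induction_on with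
    | zero => simp
    | tmul x w => simp [Algebra.TensorProduct.tmul_mul_tmul, contractBeta_tmul_mul, mul_assoc]
    | add u v hu hv => simp only [mul_add, map_add, hu, hv, add_mul]
  | add u v hu hv => simp only [add_mul, map_add, hu, hv, TensorProduct.add_tmul]

lemma pRSandwich_map_S (u : H ⊗[k] H) :
    Q.pRSandwich (TensorProduct.map LinearMap.id Q.S u)
      = TensorProduct.map LinearMap.id Q.contractBeta
          (Algebra.TensorProduct.assoc k k k H H H
            (Algebra.TensorProduct.map Q.comul (AlgHom.id k H) u) * Q.PhiInv) := by
  induction u using TensorProduct.induction_on with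
  | zero => simp
  | tmul a b => simp [pR_eq, mul_map_contractBeta_mul_one_tmul_S]
  | add u v hu hv => simp only [map_add, hu, hv, add_mul]

lemma assoc_map_comul_comul_mul_PhiInv (h : H) :
    Algebra.TensorProduct.assoc k k k H H H
        (Algebra.TensorProduct.map Q.comul (AlgHom.id k H) (Q.comul h)) * Q.PhiInv
      = Q.PhiInv * Algebra.TensorProduct.map (AlgHom.id k H) Q.comul (Q.comul h) := by
  calc _ = Q.PhiInv * (Q.Phi * Algebra.TensorProduct.assoc k k k H H H
        (Algebra.TensorProduct.map Q.comul (AlgHom.id k H) (Q.comul h))) * Q.PhiInv := by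
        rw [← mul_assoc, Q.invertible_Phi, one_mul]
    _ = _ := by rw [← Q.quasi_coassoc, mul_assoc, mul_assoc, Q.Phi_invertible, mul_one]

lemma pRSandwich_map_S_comul (g : H) :
    Q.pRSandwich (TensorProduct.map LinearMap.id Q.S (Q.comul g)) = Q.pR * (g ⊗ₜ 1) := by
  rw [pRSandwich_map_S, assoc_map_comul_comul_mul_PhiInv,
    Algebra.TensorProduct.map_mul_map_id_eq _ _ Q.unitCounit Q.contractBeta_mul_comul,
    map_unitCounit_comul, pR_eq]

lemma pRSandwich_map_contractAlpha_tmul_mul_assoc (a : H) (w d : H ⊗[k] H) :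
    Q.pRSandwich (TensorProduct.map LinearMap.id Q.contractAlpha
        ((a ⊗ₜ w) * Algebra.TensorProduct.assoc k k k H H H (d ⊗ₜ 1)))
      = Q.comul a * Q.pRSandwich (TensorProduct.map LinearMap.id Q.S d)
          * (1 ⊗ₜ Q.contractAlpha w) := by
  induction d using TensorProduct.induction_on with
  | zero => simp
  | tmul p q =>
    simp [Algebra.TensorProduct.tmul_mul_tmul, contractAlpha_mul_tmul, mul_assoc]
  | add u v hu hv => simp only [TensorProduct.add_tmul, map_add, mul_add, hu, hv, add_mul]

lemma pRSandwich_map_contractAlpha_mul_assoc_comul_tmul_one (u : H ⊗[k] (H ⊗[k] H)) (g : H) :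
    Q.pRSandwich (TensorProduct.map LinearMap.id Q.contractAlpha
        (u * Algebra.TensorProduct.assoc k k k H H H (Q.comul g ⊗ₜ 1)))
      = Q.pRSandwich (TensorProduct.map LinearMap.id Q.contractAlpha u) * (g ⊗ₜ 1) := by
  induction u using TensorProduct.induction_on with
  | zero => simp
  | tmul a w =>
    have hcomm : (g ⊗ₜ[k] (1 : H)) * (1 ⊗ₜ Q.contractAlpha w)
        = (1 ⊗ₜ Q.contractAlpha w) * (g ⊗ₜ 1) := by
      simp [Algebra.TensorProduct.tmul_mul_tmul]
    rw [pRSandwich_map_contractAlpha_tmul_mul_assoc, pRSandwich_map_S_comul]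
    simp only [TensorProduct.map_tmul, LinearMap.id_apply, pRSandwich_tmul, mul_assoc, hcomm]
  | add u v hu hv => simp only [add_mul, map_add, hu, hv]

noncomputable abbrev tmulOneRight : H ⊗[k] (H ⊗[k] H) →ₐ[k] H ⊗[k] (H ⊗[k] (H ⊗[k] H)) :=
  Algebra.TensorProduct.map (AlgHom.id k H)
    (Algebra.TensorProduct.map (AlgHom.id k H) Algebra.TensorProduct.includeLeft)

lemma contractBetaAlpha_tmul_mul_map_includeLeft (q : H) (w ω : H ⊗[k] H) :
    Q.contractBetaAlpha ((q ⊗ₜ w) * Algebra.TensorProduct.map (AlgHom.id k H)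
        Algebra.TensorProduct.includeLeft ω)
      = q * Q.contractBeta ω * Q.contractAlpha w := by
  induction ω using TensorProduct.induction_on with
  | zero => simp
  | tmul y z => simp [Algebra.TensorProduct.tmul_mul_tmul, contractAlpha_mul_tmul, mul_assoc]
  | add u v hu hv => simp only [map_add, mul_add, hu, hv, add_mul]

lemma mul_map_contractBeta_mul_one_tmul_contractAlpha (e w : H ⊗[k] H)
    (v : H ⊗[k] (H ⊗[k] H)) :
    e * TensorProduct.map LinearMap.id Q.contractBeta v * (1 ⊗ₜ Q.contractAlpha w)
      = TensorProduct.map LinearMap.id Q.contractBetaAlpha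
          (Algebra.TensorProduct.assoc k k k H H (H ⊗[k] H) (e ⊗ₜ w) * tmulOneRight v) := by
  induction e using TensorProduct.induction_on with
  | zero => simp
  | tmul p q =>
    induction v using TensorProduct.induction_on with
    | zero => simp
    | tmul x ω =>
      simp [Algebra.TensorProduct.tmul_mul_tmul, contractBetaAlpha_tmul_mul_map_includeLeft,
        mul_assoc, -contractBetaAlpha_tmul]
    | add u v hu hv => simp only [map_add, mul_add, hu, hv, add_mul]
  | add u v hu hv => simp only [TensorProduct.add_tmul, map_add, add_mul, hu, hv]

lemma pRSandwich_map_contractAlpha (u : H ⊗[k] (H ⊗[k] H)) :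
    Q.pRSandwich (TensorProduct.map LinearMap.id Q.contractAlpha u)
      = TensorProduct.map LinearMap.id Q.contractBetaAlpha
          (Algebra.TensorProduct.assoc k k k H H (H ⊗[k] H)
            (Algebra.TensorProduct.map Q.comul (AlgHom.id k (H ⊗[k] H)) u)
            * tmulOneRight Q.PhiInv) := by
  induction u using TensorProduct.induction_on with
  | zero => simp
  | tmul a w => simp [pR_eq, mul_map_contractBeta_mul_one_tmul_contractAlpha]
  | add u v hu hv => simp only [map_add, hu, hv, add_mul]

lemma map_assoc_assoc_tmul_one (u : H ⊗[k] (H ⊗[k] H)) :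
    Algebra.TensorProduct.map (AlgHom.id k H) (Algebra.TensorProduct.assoc k k k H H H).toAlgHom
        (Algebra.TensorProduct.assoc k k k H (H ⊗[k] H) H (u ⊗ₜ 1))
      = tmulOneRight u := by
  induction u using TensorProduct.induction_on with
  | zero => simp
  | tmul a w =>
    induction w using TensorProduct.induction_on with
    | zero => simp
    | tmul y z => simp
    | add v v' hv hv' =>
      simp only [TensorProduct.tmul_add, TensorProduct.add_tmul, map_add, hv, hv']
  | add u v hu hv => simp only [TensorProduct.add_tmul, map_add, hu, hv]

/-- The pentagon axiom, solved for `(Δ ⊗ id ⊗ id)(Φ) (Φ⁻¹ ⊗ 1)`. -/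
lemma assoc_map_comul_Phi_mul_tmulOneRight_PhiInv :
    Algebra.TensorProduct.assoc k k k H H (H ⊗[k] H)
        (Algebra.TensorProduct.map Q.comul (AlgHom.id k (H ⊗[k] H)) Q.Phi)
      * tmulOneRight Q.PhiInv
      = Algebra.TensorProduct.map (AlgHom.id k H)
          (Algebra.TensorProduct.map (AlgHom.id k H) Q.comul) Q.PhiInv
        * ((1 ⊗ₜ Q.Phi) * Algebra.TensorProduct.map (AlgHom.id k H)
          ((Algebra.TensorProduct.assoc k k k H H H).toAlgHom.comp
            (Algebra.TensorProduct.map Q.comul (AlgHom.id k H))) Q.Phi) := by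
  set D := Algebra.TensorProduct.map (AlgHom.id k H)
    (Algebra.TensorProduct.map (AlgHom.id k H) Q.comul)
  have hD : D Q.PhiInv * D Q.Phi = 1 := by rw [← map_mul, Q.invertible_Phi, map_one]
  have hι : tmulOneRight Q.Phi * tmulOneRight Q.PhiInv = (1 : H ⊗[k] (H ⊗[k] (H ⊗[k] H))) := by
    rw [← map_mul, Q.Phi_invertible]; exact tmulOneRight.map_one
  have hpentagon := Q.pentagon
  rw [map_assoc_assoc_tmul_one] at hpentagon
  rw [← one_mul (Algebra.TensorProduct.assoc k k k H H (H ⊗[k] H) _), ← hD, mul_assoc (D _),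
    ← hpentagon]
  simp only [mul_assoc, hι, mul_one]

lemma contractBetaAlpha_map_comul_mul (a : H ⊗[k] H) (b : H ⊗[k] (H ⊗[k] H)) :
    Q.contractBetaAlpha (Algebra.TensorProduct.map (AlgHom.id k H) Q.comul a * b)
      = Q.counitRight a * Q.contractBetaAlpha b := by
  induction a using TensorProduct.induction_on with
  | zero => simp
  | tmul y z =>
    induction b using TensorProduct.induction_on with
    | zero => simp
    | tmul q e =>
      simp [Algebra.TensorProduct.tmul_mul_tmul, contractAlpha_comul_mul, unitCounit_apply,
        Algebra.commutes, Algebra.smul_def, mul_assoc]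
    | add u v hu hv => simp only [mul_add, map_add, hu, hv]
  | add u v hu hv => simp only [map_add, add_mul, hu, hv]

lemma contractBetaAlpha_mul_assoc_tmul (a : H) (ω d : H ⊗[k] H) (r : H) :
    Q.contractBetaAlpha ((a ⊗ₜ ω) * Algebra.TensorProduct.assoc k k k H H H (d ⊗ₜ r))
      = a * Q.contractBeta d * (Q.contractAlpha ω * r) := by
  induction d using TensorProduct.induction_on with
  | zero => simp
  | tmul p q => simp [Algebra.TensorProduct.tmul_mul_tmul, contractAlpha_mul_tmul, mul_assoc]
  | add u v hu hv => simp only [TensorProduct.add_tmul, map_add, mul_add, hu, hv, add_mul]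

lemma contractBetaAlpha_mul_assoc_map_comul (b : H ⊗[k] (H ⊗[k] H)) (e : H ⊗[k] H) :
    Q.contractBetaAlpha (b * ((Algebra.TensorProduct.assoc k k k H H H).toAlgHom.comp
        (Algebra.TensorProduct.map Q.comul (AlgHom.id k H))) e)
      = Q.contractBetaAlpha b * Q.counitLeft e := by
  induction b using TensorProduct.induction_on with
  | zero => simp
  | tmul a ω =>
    induction e using TensorProduct.induction_on with
    | zero => simp
    | tmul q r =>
      simp [contractBetaAlpha_mul_assoc_tmul, contractBeta_comul, mul_assoc]
    | add u v hu hv => simp only [map_add, mul_add, hu, hv]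
  | add u v hu hv => simp only [add_mul, map_add, hu, hv]

lemma pRSandwich_map_contractAlpha_Phi :
    Q.pRSandwich (TensorProduct.map LinearMap.id Q.contractAlpha Q.Phi) = 1 := by
  rw [pRSandwich_map_contractAlpha, assoc_map_comul_Phi_mul_tmulOneRight_PhiInv,
    Algebra.TensorProduct.map_id_map_mul_eq _ _ _ Q.contractBetaAlpha_map_comul_mul,
    map_counitRight_PhiInv, one_mul,
    Algebra.TensorProduct.map_mul_map_id_eq _ _ _ Q.contractBetaAlpha_mul_assoc_map_comul,
    map_counitLeft_Phi, mul_one, TensorProduct.map_tmul, contractBetaAlpha_Phi]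
  rfl

lemma pRSandwich_Tel (t : H) : Q.pRSandwich (Q.Tel t) = t ⊗ₜ 1 := by
  rw [Tel_eq, pRSandwich_map_contractAlpha_mul_assoc_comul_tmul_one,
    pRSandwich_map_contractAlpha_Phi, one_mul]

variable {Q} {t : H}

lemma mul_tmul_one_of_mem_leftIntegrals (ht : t ∈ Q.leftIntegrals) (u : H ⊗[k] H) :
    u * (t ⊗ₜ 1) = t ⊗ₜ Q.counitLeft u := by
  induction u using TensorProduct.induction_on with
  | zero => simp
  | tmul a b => simp [Algebra.TensorProduct.tmul_mul_tmul, ht a, TensorProduct.smul_tmul]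
  | add u v hu hv => simp [add_mul, hu, hv, TensorProduct.tmul_add]

lemma comul_mul_tmul_one_of_mem_leftIntegrals (ht : t ∈ Q.leftIntegrals) (h : H) :
    Q.comul h * (t ⊗ₜ 1) = t ⊗ₜ h := by
  rw [mul_tmul_one_of_mem_leftIntegrals ht, counitLeft_comul]

lemma assoc_map_comul_mul_assoc_comul_tmul_one (ht : t ∈ Q.leftIntegrals) (h : H) :
    Algebra.TensorProduct.assoc k k k H H H
        (Algebra.TensorProduct.map Q.comul (AlgHom.id k H) (Q.comul h))
      * Algebra.TensorProduct.assoc k k k H H H (Q.comul t ⊗ₜ 1)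
      = Algebra.TensorProduct.assoc k k k H H H (Q.comul t ⊗ₜ 1) * (1 ⊗ₜ (1 ⊗ₜ h)) := by
  have hΔt : Q.comul t ⊗ₜ[k] (1 : H)
      = Algebra.TensorProduct.map Q.comul (AlgHom.id k H) (t ⊗ₜ 1) := by simp
  have h1h : (1 : H) ⊗ₜ[k] ((1 : H) ⊗ₜ[k] h)
      = Algebra.TensorProduct.assoc k k k H H H (1 ⊗ₜ h) := by
    simp [Algebra.TensorProduct.one_def]
  rw [← map_mul, hΔt, ← map_mul, comul_mul_tmul_one_of_mem_leftIntegrals ht, h1h, ← map_mul]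
  simp [Algebra.TensorProduct.tmul_mul_tmul]

theorem tmul_one_mul_Tel (ht : t ∈ Q.leftIntegrals) (h : H) :
    (h ⊗ₜ 1) * Q.Tel t = Q.Tel t * (1 ⊗ₜ h) := by
  calc (h ⊗ₜ 1) * Q.Tel t
      = TensorProduct.map LinearMap.id Q.contractAlpha
          (Algebra.TensorProduct.map (AlgHom.id k H) Q.comul (Q.comul h)
            * (Q.Phi * Algebra.TensorProduct.assoc k k k H H H (Q.comul t ⊗ₜ 1))) := by
        rw [Algebra.TensorProduct.map_id_map_mul_eq _ _ Q.unitCounit Q.contractAlpha_comul_mul,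
          map_unitCounit_comul, Tel_eq]
    _ = TensorProduct.map LinearMap.id Q.contractAlpha
          ((Q.Phi * Algebra.TensorProduct.assoc k k k H H H (Q.comul t ⊗ₜ 1))
            * Algebra.TensorProduct.map (AlgHom.id k H) Algebra.TensorProduct.includeRight
              (1 ⊗ₜ h)) := by
        rw [← mul_assoc, Q.quasi_coassoc, mul_assoc,
          assoc_map_comul_mul_assoc_comul_tmul_one ht, ← mul_assoc]
        rfl
    _ = Q.Tel t * (1 ⊗ₜ h) := by
        rw [Algebra.TensorProduct.map_mul_map_id_eq _ _ (AlgHom.id k H)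
          (fun e c => by simpa [Q.S_one] using Q.contractAlpha_mul_tmul e 1 c), Tel_eq]
        rfl

lemma pRSandwich_tmul_one_mul_Tel (ht : t ∈ Q.leftIntegrals) (h : H) :
    Q.pRSandwich ((h ⊗ₜ 1) * Q.Tel t) = t ⊗ₜ h := by
  rw [pRSandwich_tmul_one_mul, pRSandwich_Tel, comul_mul_tmul_one_of_mem_leftIntegrals ht]

theorem finiteDimensional_of_mem_leftIntegrals (ht : t ∈ Q.leftIntegrals) (ht0 : t ≠ 0) :
    FiniteDimensional k H :=
  finiteDimensional_of_tmul_one_mul_eq_mul_one_tmul (Q.Tel t) (tmul_one_mul_Tel ht)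
    fun h hh => TensorProduct.eq_zero_of_tmul_eq_zero ht0 <| by
      rw [← pRSandwich_tmul_one_mul_Tel ht, hh, map_zero]

theorem leftIntegrals_eq_bot (hfd : ¬ FiniteDimensional k H) : Q.leftIntegrals = ⊥ :=
  (Submodule.eq_bot_iff _).mpr fun _ ht =>
    by_contra fun ht0 => hfd (finiteDimensional_of_mem_leftIntegrals ht ht0)

lemma symm_ofBijective_S_mem_leftIntegrals (hS : Function.Bijective Q.S)
    (ht : t ∈ Q.rightIntegrals) : (LinearEquiv.ofBijective Q.S hS).symm t ∈ Q.leftIntegrals := by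
  intro h
  have hs : Q.S ((LinearEquiv.ofBijective Q.S hS).symm t) = t :=
    (LinearEquiv.ofBijective Q.S hS).apply_symm_apply t
  apply hS.injective
  rw [Q.S_mul, map_smul, hs, ht (Q.S h), counit_S]

end QuasiHopfAlgebra

/-- an infinite dimensional quasi-Hopf algebra with bijective antipode
has no non-zero left or right integrals. -/
theorem integrals_eq_bot_of_infiniteDimensional {k H : Type*} [Field k]
    [Ring H] [Algebra k H] (Q : QuasiHopfAlgebra k H)
    (hS : Function.Bijective Q.S) (hfd : ¬ FiniteDimensional k H) :
    Q.leftIntegrals = ⊥ ∧ Q.rightIntegrals = ⊥ := by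
  have hleft : Q.leftIntegrals = ⊥ := QuasiHopfAlgebra.leftIntegrals_eq_bot hfd
  refine ⟨hleft, (Submodule.eq_bot_iff _).mpr fun t ht => ?_⟩
  have := Q.symm_ofBijective_S_mem_leftIntegrals hS ht
  rwa [hleft, Submodule.mem_bot, LinearEquiv.map_eq_zero_iff] at this
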